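/- Let α₁ ≠ α₂ be elements of F, m₁, m₂ positive integers with m₁+m₂ = n, and V_G the confluent Vandermonde matrix for (x-α₁)^{m₁}(x-α₂)^{m₂}. Then the (i,j) entry of the first m₁ rows of V_G⁻¹ (1 ≤ i ≤ m₁, 1 ≤ j ≤ n) is a_{ij} = ∑_{p=0}^{m₁-i} (-1)^{m₂+i+j}·C(m₂+p-1, m₂-1)/(α₁-α₂)^{m₂+p} · ∑_{r=0}^{j-1} C(i+p-1, r)·C(m₂, j-1-r)·α₁^{p+i-1-r}·α₂^{m₂-j+1+r}. -/

import Mathlib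

open Polynomial Finset Matrix

/-!
If `c` is the coefficient vector of a polynomial `P` of degree `< n`, then `c ᵥ* V_G` lists the
Taylor coefficients `(taylor αⱼ P).coeff k` (Hasse derivatives) at `α₁` for `k < m₁` and at `α₂`
for `k < m₂`. Since `V_G * W = 1`, row `i` of `W` is therefore the coefficient vector of the
Hermite basis polynomial `H` with `taylor α₁ H ≡ X ^ i mod X ^ m₁` and `(X - α₂) ^ m₂ ∣ H`.
Take `H = (X - α₁) ^ i (X - α₂) ^ m₂ T`, where `T` is the inverse of `(X - α₂) ^ m₂` modulo
`(X - α₁) ^ (m₁ - i)`: the truncation of the power series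
`((X - α₁) + (α₁ - α₂)) ^ (-m₂) = ∑ (-1) ^ p C(m₂ + p - 1, m₂ - 1) (X - α₁) ^ p / (α₁ - α₂) ^ (m₂ + p)`,
obtained by rescaling `(1 - X) ^ (-m₂)`. Expanding `H` by the binomial theorem gives the formula.
-/

theorem Matrix.row_eq_of_vecMul_eq_single {m n R : Type*} [Fintype m] [Fintype n]
    [DecidableEq m] [DecidableEq n] [Semiring R] {A : Matrix n m R} {W : Matrix m n R}
    (hAW : A * W = 1) {c : n → R} {i : m} (hc : c ᵥ* A = Pi.single i 1) : W i = c := by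
  rw [← W.row_apply' i, ← single_one_vecMul, ← hc, vecMul_vecMul, hAW, vecMul_one]

theorem PowerSeries.X_add_C_pow_mul_mk_eq_one {F : Type*} [Field F] {d : F} (hd : d ≠ 0) {m : ℕ}
    (hm : 0 < m) :
    (X + C d) ^ m * mk (fun p => (-1) ^ p * ((m + p - 1).choose (m - 1) : F) / d ^ (m + p)) = 1 := by
  obtain ⟨m, rfl⟩ := Nat.exists_eq_add_one_of_ne_zero hm.ne'
  have hlin : X + C d = C d * rescale (-d⁻¹) (1 - X) := by
    rw [map_sub, map_one, rescale_X, mul_sub, mul_one, ← mul_assoc, ← map_mul]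
    field_simp
    simp [add_comm]
  have hmk : mk (fun p => (-1) ^ p * ((m + 1 + p - 1).choose (m + 1 - 1) : F) / d ^ (m + 1 + p))
      = C (d ^ (m + 1))⁻¹ * rescale (-d⁻¹) (mk fun p => ((m + p).choose m : F)) := by
    ext p
    rw [coeff_C_mul, coeff_rescale, coeff_mk, coeff_mk, neg_pow (d⁻¹), inv_pow,
      show m + 1 + p - 1 = m + p by omega, Nat.add_sub_cancel]
    field_simp
    ring
  rw [hlin, hmk, mul_pow, ← map_pow, ← map_pow, mul_mul_mul_comm, ← map_mul, ← map_mul,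
    mul_inv_cancel₀ (pow_ne_zero _ hd), mul_comm ((1 - X) ^ (m + 1)),
    mk_add_choose_mul_one_sub_pow_eq_one, map_one, map_one, one_mul]

namespace Polynomial

section CommRing

variable {R : Type*} [CommRing R]

theorem X_pow_dvd_mul_trunc_sub_one {f : R[X]} {g : PowerSeries R}
    (hfg : (f : PowerSeries R) * g = 1) (N : ℕ) : X ^ N ∣ f * PowerSeries.trunc N g - 1 := by
  rw [X_pow_dvd_iff]
  intro d hd
  have key : PowerSeries.trunc N ((f : PowerSeries R) * (PowerSeries.trunc N g : PowerSeries R))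
      = PowerSeries.trunc N 1 := by
    rw [PowerSeries.trunc_mul_trunc, hfg]
  have := congrArg (fun p => p.coeff d) key
  simp only [PowerSeries.coeff_trunc, if_pos hd, ← coe_mul, coeff_coe] at this
  rw [coeff_sub, this, ← coe_one, coeff_coe, sub_self]

theorem taylor_coeff_eq_sum_fin {n : ℕ} {P : R[X]} (hP : P.natDegree < n) (a : R) (k : ℕ) :
    (taylor a P).coeff k = ∑ r : Fin n, P.coeff r * ((r : ℕ).choose k * a ^ ((r : ℕ) - k)) := by
  rw [taylor_coeff, hasseDeriv_apply, eval_sum, sum_over_range' _ (by simp) n hP,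
    ← Fin.sum_univ_eq_sum_range]
  refine Finset.sum_congr rfl fun r _ => ?_
  rw [eval_monomial]
  ring

theorem taylor_X_sub_C_pow_mul (a : R) (m : ℕ) (q : R[X]) :
    taylor a ((X - C a) ^ m * q) = X ^ m * taylor a q := by
  simp

theorem taylor_coeff_eq_of_X_sub_C_pow_dvd_sub {a : R} {m k : ℕ} {P Q : R[X]}
    (h : (X - C a) ^ m ∣ P - Q) (hk : k < m) : (taylor a P).coeff k = (taylor a Q).coeff k := by
  obtain ⟨q, hq⟩ := h
  rw [← sub_eq_zero, ← coeff_sub, ← map_sub, hq, taylor_X_sub_C_pow_mul, coeff_X_pow_mul',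
    if_neg (by omega)]

theorem coeff_X_sub_C_pow_mul_X_sub_C_pow (a b : R) (k m j : ℕ) :
    ((X - C a) ^ k * (X - C b) ^ m).coeff j = (-1) ^ (k + m + j) *
      ∑ r ∈ range (j + 1), (k.choose r * m.choose (j - r) : R) * a ^ (k - r) * b ^ (m + r - j) := by
  rw [coeff_mul, Nat.sum_antidiagonal_eq_sum_range_succ_mk, mul_sum]
  refine sum_congr rfl fun r hr => ?_
  have hrj : r ≤ j := Nat.lt_succ_iff.mp (mem_range.mp hr)
  simp only [sub_eq_add_neg, ← C_neg, coeff_X_add_C_pow]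
  by_cases hrk : r ≤ k
  · by_cases hjm : j - r ≤ m
    · have hsign : (-1 : R) ^ (k + m + j) = (-1) ^ (k - r) * (-1) ^ (m - (j - r)) := by
        rw [← pow_add, show k + m + j = k - r + (m - (j - r)) + 2 * j by omega, pow_add, pow_mul,
          neg_one_sq, one_pow, mul_one]
      rw [hsign, neg_pow a, neg_pow b, show m - (j - r) = m + r - j by omega]
      ring
    · simp [Nat.choose_eq_zero_of_lt (not_le.mp hjm)]
  · simp [Nat.choose_eq_zero_of_lt (not_le.mp hrk)]

end CommRing

variable {F : Type*} [Field F]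

noncomputable def truncInvXSubCPow (a b : F) (m N : ℕ) : F[X] :=
  ∑ p ∈ range N, C ((-1) ^ p * ((m + p - 1).choose (m - 1) : F) / (a - b) ^ (m + p)) * (X - C a) ^ p

theorem natDegree_truncInvXSubCPow_le (a b : F) (m N : ℕ) :
    (truncInvXSubCPow a b m N).natDegree ≤ N - 1 :=
  natDegree_sum_le_of_forall_le _ _ fun p hp =>
    (natDegree_C_mul_le _ _).trans <| by
      rw [natDegree_pow, natDegree_X_sub_C, mul_one]
      have := mem_range.mp hp
      omega

theorem X_sub_C_pow_dvd_X_sub_C_pow_mul_truncInvXSubCPow_sub_one {a b : F} (hab : a ≠ b) {m : ℕ}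
    (hm : 0 < m) (N : ℕ) : (X - C a) ^ N ∣ (X - C b) ^ m * truncInvXSubCPow a b m N - 1 := by
  have hinv := PowerSeries.X_add_C_pow_mul_mk_eq_one (sub_ne_zero.mpr hab) hm
  rw [← coe_X, ← coe_C, ← coe_add, ← coe_pow] at hinv
  have h := _root_.map_dvd (aeval (X - C a)) (X_pow_dvd_mul_trunc_sub_one hinv N)
  simp only [map_sub, map_mul, map_pow, map_add, map_one, aeval_def, eval₂_X, eval₂_C, algebraMap_eq,
    sub_add_sub_cancel, PowerSeries.eval₂_trunc_eq_sum_range, PowerSeries.coeff_mk] at h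
  exact h

noncomputable def hermiteBasis (α₁ α₂ : F) (m₁ m₂ i : ℕ) : F[X] :=
  (X - C α₁) ^ i * (X - C α₂) ^ m₂ * truncInvXSubCPow α₁ α₂ m₂ (m₁ - i)

variable {α₁ α₂ : F} {m₁ m₂ i : ℕ}

theorem natDegree_hermiteBasis_lt (hi : i < m₁) :
    (hermiteBasis α₁ α₂ m₁ m₂ i).natDegree < m₁ + m₂ := by
  have hpow (a : F) (k : ℕ) : ((X - C a) ^ k).natDegree ≤ k := by simp
  refine (natDegree_mul_le.trans (add_le_add (natDegree_mul_le.trans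
    (add_le_add (hpow α₁ i) (hpow α₂ m₂))) (natDegree_truncInvXSubCPow_le _ _ _ _))).trans_lt ?_
  omega

theorem taylor_coeff_hermiteBasis_left (hne : α₁ ≠ α₂) (hm₂ : 0 < m₂) {k : ℕ} (hk : k < m₁) :
    (taylor α₁ (hermiteBasis α₁ α₂ m₁ m₂ i)).coeff k = if k = i then 1 else 0 := by
  have hdvd : (X - C α₁) ^ m₁ ∣ hermiteBasis α₁ α₂ m₁ m₂ i - (X - C α₁) ^ i := by
    have h := X_sub_C_pow_dvd_X_sub_C_pow_mul_truncInvXSubCPow_sub_one hne hm₂ (m₁ - i)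
    rw [hermiteBasis, mul_assoc, ← mul_sub_one]
    calc (X - C α₁) ^ m₁ ∣ (X - C α₁) ^ (i + (m₁ - i)) := pow_dvd_pow _ (by omega)
      _ ∣ _ := by rw [pow_add]; exact mul_dvd_mul_left _ h
  rw [taylor_coeff_eq_of_X_sub_C_pow_dvd_sub hdvd hk]
  simp [coeff_X_pow]

theorem taylor_coeff_hermiteBasis_right {k : ℕ} (hk : k < m₂) :
    (taylor α₂ (hermiteBasis α₁ α₂ m₁ m₂ i)).coeff k = 0 := by
  have hdvd : (X - C α₂) ^ m₂ ∣ hermiteBasis α₁ α₂ m₁ m₂ i - 0 := by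
    rw [sub_zero, hermiteBasis]
    exact dvd_mul_of_dvd_left (dvd_mul_left _ _) _
  rw [taylor_coeff_eq_of_X_sub_C_pow_dvd_sub hdvd hk, map_zero, coeff_zero]

theorem coeff_hermiteBasis (j : ℕ) : (hermiteBasis α₁ α₂ m₁ m₂ i).coeff j =
    ∑ p ∈ range (m₁ - i), (-1 : F) ^ (m₂ + i + j) *
      ((m₂ + p - 1).choose (m₂ - 1) : F) / (α₁ - α₂) ^ (m₂ + p) *
      ∑ r ∈ range (j + 1), ((i + p).choose r : F) * (m₂.choose (j - r) : F) *
        α₁ ^ (p + i - r) * α₂ ^ (m₂ + r - j) := by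
  rw [hermiteBasis, truncInvXSubCPow, mul_sum, finsetSum_coeff]
  refine sum_congr rfl fun p _ => ?_
  have hsign : (-1 : F) ^ p * (-1) ^ (i + p + m₂ + j) = (-1) ^ (m₂ + i + j) := by
    rw [← pow_add, show p + (i + p + m₂ + j) = m₂ + i + j + 2 * p by omega, pow_add,
      (even_two_mul p).neg_one_pow, mul_one]
  have hterm (c : F) : (X - C α₁) ^ i * (X - C α₂) ^ m₂ * (C c * (X - C α₁) ^ p) =
      C c * ((X - C α₁) ^ (i + p) * (X - C α₂) ^ m₂) := by ring
  rw [hterm, coeff_C_mul, coeff_X_sub_C_pow_mul_X_sub_C_pow,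
    ← hsign, add_comm p i]
  ring

end Polynomial

theorem stmt17_general {F : Type*} [Field F] (α₁ α₂ : F) (hne : α₁ ≠ α₂)
    (m₁ m₂ : ℕ) (hm₂ : 0 < m₂) (n : ℕ) (hn : n = m₁ + m₂)
    (VG : Matrix (Fin n) (Fin m₁ ⊕ Fin m₂) F)
    (hVG : ∀ (r : Fin n) (p : Fin m₁ ⊕ Fin m₂),
      VG r p = Sum.elim
        (fun k : Fin m₁ => ((r : ℕ).choose (k : ℕ) : F) * α₁ ^ ((r : ℕ) - (k : ℕ)))
        (fun k : Fin m₂ => ((r : ℕ).choose (k : ℕ) : F) * α₂ ^ ((r : ℕ) - (k : ℕ))) p) :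
    ∀ W : Matrix (Fin m₁ ⊕ Fin m₂) (Fin n) F,
      VG * W = 1 → W * VG = 1 →
        ∀ (i : Fin m₁) (j : Fin n),
          W (Sum.inl i) j =
            ∑ p ∈ Finset.range (m₁ - (i : ℕ)),
              (-1 : F) ^ (m₂ + (i : ℕ) + (j : ℕ)) *
                ((m₂ + p - 1).choose (m₂ - 1) : F) / (α₁ - α₂) ^ (m₂ + p) *
              ∑ r ∈ Finset.range ((j : ℕ) + 1),
                (((i : ℕ) + p).choose r : F) * (m₂.choose ((j : ℕ) - r) : F) *
                  α₁ ^ (p + (i : ℕ) - r) * α₂ ^ (m₂ + r - (j : ℕ)) := by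
  intro W hVW _ i j
  set H := hermiteBasis α₁ α₂ m₁ m₂ i
  have hH : H.natDegree < n := hn ▸ natDegree_hermiteBasis_lt i.isLt
  have hrow : (fun r : Fin n => H.coeff r) ᵥ* VG = Pi.single (Sum.inl i) 1 := by
    funext c
    rcases c with k | k
    · simp only [vecMul, dotProduct, hVG, Sum.elim_inl]
      rw [← taylor_coeff_eq_sum_fin hH, taylor_coeff_hermiteBasis_left hne hm₂ k.isLt]
      simp [Pi.single_apply, Fin.val_inj]
    · simp only [vecMul, dotProduct, hVG, Sum.elim_inr]
      rw [← taylor_coeff_eq_sum_fin hH, taylor_coeff_hermiteBasis_right k.isLt]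
      simp
  rw [row_eq_of_vecMul_eq_single hVW hrow]
  exact coeff_hermiteBasis j

/-- For the confluent Vandermonde matrix of
`(x-α₁)^{m₁}(x-α₂)^{m₂}` (columns indexed by `Fin m₁ ⊕ Fin m₂`, the column
`(1,k)` having `r`-th entry `C(r,k) α₁^{r-k}` etc.), the entries of the first
`m₁` rows of the inverse are given by the explicit double-sum formula `a_{ij}`.
(Indices here are 0-based: row `i : Fin m₁`, column `j : Fin n` correspond to
the paper's `i+1, j+1`.) -/
theorem stmt17 {F : Type*} [Field F] [CharZero F] (α₁ α₂ : F) (hne : α₁ ≠ α₂)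
    (m₁ m₂ : ℕ) (hm₁ : 0 < m₁) (hm₂ : 0 < m₂) (n : ℕ) (hn : n = m₁ + m₂)
    (VG : Matrix (Fin n) (Fin m₁ ⊕ Fin m₂) F)
    (hVG : ∀ (r : Fin n) (p : Fin m₁ ⊕ Fin m₂),
      VG r p = Sum.elim
        (fun k : Fin m₁ => ((r : ℕ).choose (k : ℕ) : F) * α₁ ^ ((r : ℕ) - (k : ℕ)))
        (fun k : Fin m₂ => ((r : ℕ).choose (k : ℕ) : F) * α₂ ^ ((r : ℕ) - (k : ℕ))) p) :
    ∀ W : Matrix (Fin m₁ ⊕ Fin m₂) (Fin n) F,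
      VG * W = 1 → W * VG = 1 →
        ∀ (i : Fin m₁) (j : Fin n),
          W (Sum.inl i) j =
            ∑ p ∈ Finset.range (m₁ - (i : ℕ)),
              (-1 : F) ^ (m₂ + (i : ℕ) + (j : ℕ)) *
                ((m₂ + p - 1).choose (m₂ - 1) : F) / (α₁ - α₂) ^ (m₂ + p) *
              ∑ r ∈ Finset.range ((j : ℕ) + 1),
                (((i : ℕ) + p).choose r : F) * (m₂.choose ((j : ℕ) - r) : F) *
                  α₁ ^ (p + (i : ℕ) - r) * α₂ ^ (m₂ + r - (j : ℕ)) :=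
  stmt17_general α₁ α₂ hne m₁ m₂ hm₂ n hn VG hVG
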